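/- arXiv:2010.09027 — 2 statements merged into one kernel-verified Lean document; each statement's English description precedes it below -/
import Mathlib

section
/- Let g be a volume-preserving diffeomorphism of ℝ³ and let v : ℝ³ → ℝ³ be a smooth compactly supported vector field. Then the helicity is invariant under pullback: ℋ(x ↦ (Dg(x))ᵀ v(g(x))) = ℋ(v). (In the paper's notation: I(Ad(g)*ω) = I(ω) for the helicity functional I on vorticity two-forms.) -/
open MeasureTheory Matrix

noncomputable section

/-- Vector fields on ℝ³ modeled as functions `Fin 3 → ℝ`. -/
abbrev V3 := Fin 3 → ℝ

/-- Partial derivative `∂ᵢ f` of a scalar function. -/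
noncomputable def pd (i : Fin 3) (f : V3 → ℝ) (x : V3) : ℝ :=
  fderiv ℝ f x (Pi.single i 1)

/-- Curl of a vector field on ℝ³. -/
noncomputable def vcurl (v : V3 → V3) (x : V3) : V3 :=
  ![pd 1 (fun y => v y 2) x - pd 2 (fun y => v y 1) x,
    pd 2 (fun y => v y 0) x - pd 0 (fun y => v y 2) x,
    pd 0 (fun y => v y 1) x - pd 1 (fun y => v y 0) x]

/-- Divergence of a vector field on ℝ³. -/
noncomputable def vdiv (v : V3 → V3) (x : V3) : ℝ :=
  pd 0 (fun y => v y 0) x + pd 1 (fun y => v y 1) x + pd 2 (fun y => v y 2) x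

/-- Jacobian matrix `Dg(x)` of a map `g : ℝ³ → ℝ³`, `(jac g x) i j = ∂ⱼ gⁱ (x)`. -/
noncomputable def jac (g : V3 → V3) (x : V3) : Matrix (Fin 3) (Fin 3) ℝ :=
  fun i j => pd j (fun y => g y i) x

/-- Euclidean inner product on ℝ³. -/
def dot (a b : V3) : ℝ := ∑ i, a i * b i

/-- Helicity of a vector field. -/
noncomputable def Hel (v : V3 → V3) : ℝ := ∫ x : V3, dot (v x) (vcurl v x)

lemma contDiff_comp_apply {n : WithTop ℕ∞} {v : V3 → V3} (hv : ContDiff ℝ n v) (k : Fin 3) :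
    ContDiff ℝ n (fun y => v y k) :=
  (ContinuousLinearMap.proj k (R := ℝ) (φ := fun _ : Fin 3 => ℝ)).contDiff.comp hv


-- fderiv applied to vector = sum of pd's
lemma fderiv_apply_eq_sum {f : V3 → ℝ} {x : V3} (hf : DifferentiableAt ℝ f x) (u : V3) :
    fderiv ℝ f x u = ∑ l, u l * pd l f x := by
  have hu : u = ∑ l, u l • (Pi.single l 1 : V3) := by
    funext j
    simp [Finset.sum_apply, Pi.single_apply, Finset.sum_ite_eq]
  conv_lhs => rw [hu]
  rw [map_sum]
  simp [pd, smul_eq_mul]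

-- pd of component of v equals (fderiv v x e_j) k
lemma fderiv_pi_apply {v : V3 → V3} {x : V3} (hv : DifferentiableAt ℝ v x) (j k : Fin 3) :
    fderiv ℝ v x (Pi.single j 1) k = pd j (fun y => v y k) x := by
  have h : ∀ i, DifferentiableAt ℝ (fun y => v y i) x := fun i =>
    ((ContinuousLinearMap.proj i (R := ℝ) (φ := fun _ : Fin 3 => ℝ)).differentiableAt).comp x hv
  have := fderiv_pi (𝕜 := ℝ) (φ := fun i y => v y i) (x := x) h
  rw [show v = (fun y i => v y i) from rfl, this]
  simp [pd]

-- chain rule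
lemma pd_comp {f : V3 → ℝ} {g : V3 → V3} {x : V3} (hf : DifferentiableAt ℝ f (g x))
    (hg : DifferentiableAt ℝ g x) (j : Fin 3) :
    pd j (fun y => f (g y)) x = ∑ l, pd j (fun y => g y l) x * pd l f (g x) := by
  have h : pd j (fun y => f (g y)) x = fderiv ℝ f (g x) (fderiv ℝ g x (Pi.single j 1)) := by
    unfold pd
    rw [show (fun y => f (g y)) = f ∘ g from rfl, fderiv_comp x hf hg]
    rfl
  rw [h, fderiv_apply_eq_sum hf]
  exact Finset.sum_congr rfl fun l _ => by rw [fderiv_pi_apply hg]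

-- product rule
lemma pd_mul {a b : V3 → ℝ} {x : V3} (ha : DifferentiableAt ℝ a x) (hb : DifferentiableAt ℝ b x)
    (j : Fin 3) : pd j (fun y => a y * b y) x = pd j a x * b x + a x * pd j b x := by
  unfold pd; rw [fderiv_fun_mul ha hb]; simp; ring
lemma pd_sum {f : Fin 3 → V3 → ℝ} {x : V3} (hf : ∀ k, DifferentiableAt ℝ (f k) x) (j : Fin 3) :
    pd j (fun y => ∑ k, f k y) x = ∑ k, pd j (f k) x := by
  unfold pd
  rw [fderiv_fun_sum (fun k _ => hf k)]
  simp
lemma contDiff_pd {f : V3 → ℝ} (hf : ContDiff ℝ (⊤ : ℕ∞) f) (i : Fin 3) :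
    ContDiff ℝ (⊤ : ℕ∞) (fun y => pd i f y) := by
  have h1 : ContDiff ℝ (⊤ : ℕ∞) (fderiv ℝ f) := hf.fderiv_right (by simp)
  exact h1.clm_apply contDiff_const
lemma pd_pd_symm {f : V3 → ℝ} (hf : ContDiff ℝ (⊤ : ℕ∞) f) (x : V3) (i j : Fin 3) :
    pd j (fun y => pd i f y) x = pd i (fun y => pd j f y) x := by
  set f' := fderiv ℝ f with hf'def
  have hdf : Differentiable ℝ f := hf.differentiable (by simp)
  have hdf' : DifferentiableAt ℝ f' x := ((hf.fderiv_right (m := (⊤ : ℕ∞)) (by simp)).differentiable (by simp)).differentiableAt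
  set f'' := fderiv ℝ f' x with hf''def
  have key : ∀ a b : Fin 3, pd b (fun y => pd a f y) x = (f'' (Pi.single b 1)) (Pi.single a 1) := by
    intro a b
    have : (fun y => pd a f y) = fun y => f' y (Pi.single a 1) := rfl
    rw [this]
    unfold pd
    rw [fderiv_clm_apply hdf' (differentiableAt_const _)]
    simp
    rfl
  rw [key i j, key j i]
  exact second_derivative_symmetric (f' := f') (fun y => (hdf y).hasFDerivAt) hdf'.hasFDerivAt _ _
lemma alg_key (A B : Matrix (Fin 3) (Fin 3) ℝ) (S : Fin 3 → Matrix (Fin 3) (Fin 3) ℝ)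
    (u : Fin 3 → ℝ) (P : Fin 3 → Fin 3 → ℝ)
    (hP : ∀ i j, P i j = ∑ k, (S k i j * u k + A k i * ∑ l, B k l * A l j))
    (hS : ∀ k i j, S k i j = S k j i) (hdet : A.det = 1) :
    (∑ k, A k 0 * u k) * (P 2 1 - P 1 2) + (∑ k, A k 1 * u k) * (P 0 2 - P 2 0) +
      (∑ k, A k 2 * u k) * (P 1 0 - P 0 1)
    = u 0 * (B 2 1 - B 1 2) + u 1 * (B 0 2 - B 2 0) + u 2 * (B 1 0 - B 0 1) := by
  simp only [hP, Fin.sum_univ_three]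
  rw [Matrix.det_fin_three] at hdet
  linear_combination
    (u 0 * (B 2 1 - B 1 2) + u 1 * (B 0 2 - B 2 0) + u 2 * (B 1 0 - B 0 1)) * hdet +
    ((A 0 0 * u 0 + A 1 0 * u 1 + A 2 0 * u 2) * u 0) * hS 0 2 1 +
    ((A 0 0 * u 0 + A 1 0 * u 1 + A 2 0 * u 2) * u 1) * hS 1 2 1 +
    ((A 0 0 * u 0 + A 1 0 * u 1 + A 2 0 * u 2) * u 2) * hS 2 2 1 +
    ((A 0 1 * u 0 + A 1 1 * u 1 + A 2 1 * u 2) * u 0) * hS 0 0 2 +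
    ((A 0 1 * u 0 + A 1 1 * u 1 + A 2 1 * u 2) * u 1) * hS 1 0 2 +
    ((A 0 1 * u 0 + A 1 1 * u 1 + A 2 1 * u 2) * u 2) * hS 2 0 2 +
    ((A 0 2 * u 0 + A 1 2 * u 1 + A 2 2 * u 2) * u 0) * hS 0 1 0 +
    ((A 0 2 * u 0 + A 1 2 * u 1 + A 2 2 * u 2) * u 1) * hS 1 1 0 +
    ((A 0 2 * u 0 + A 1 2 * u 1 + A 2 2 * u 2) * u 2) * hS 2 1 0
lemma ptwise (g v : V3 → V3) (hg : ContDiff ℝ (⊤ : ℕ∞) g) (hv : ContDiff ℝ (⊤ : ℕ∞) v)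
    (hvol : ∀ x, (jac g x).det = 1) (x : V3) :
    dot ((jac g x)ᵀ.mulVec (v (g x))) (vcurl (fun y => (jac g y)ᵀ.mulVec (v (g y))) x)
      = dot (v (g x)) (vcurl v (g x)) := by
  set W : V3 → V3 := fun y => (jac g y)ᵀ.mulVec (v (g y)) with hW
  have hgk : ∀ k, ContDiff ℝ (⊤ : ℕ∞) (fun y => g y k) := fun k => contDiff_comp_apply hg k
  have hvk : ∀ k, ContDiff ℝ (⊤ : ℕ∞) (fun y => v y k) := fun k => contDiff_comp_apply hv k
  have hgd : Differentiable ℝ g := hg.differentiable (by simp)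
  have hw : ∀ i, (fun y => W y i) = fun y => ∑ k, pd i (fun z => g z k) y * v (g y) k := by
    intro i; funext y
    simp [hW, jac, Matrix.mulVec, dotProduct, Matrix.transpose_apply]
  set A : Matrix (Fin 3) (Fin 3) ℝ := jac g x with hA
  set B : Matrix (Fin 3) (Fin 3) ℝ := fun k l => pd l (fun z => v z k) (g x) with hB
  set S : Fin 3 → Matrix (Fin 3) (Fin 3) ℝ :=
    fun k i j => pd j (fun y => pd i (fun z => g z k) y) x with hS
  set u : Fin 3 → ℝ := fun k => v (g x) k with hu
  set P : Fin 3 → Fin 3 → ℝ := fun i j => pd j (fun y => W y i) x with hPdef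
  have hP : ∀ i j, P i j = ∑ k, (S k i j * u k + A k i * ∑ l, B k l * A l j) := by
    intro i j
    have hsummand : ∀ k : Fin 3, DifferentiableAt ℝ (fun y => pd i (fun z => g z k) y * v (g y) k) x := by
      intro k
      exact (((contDiff_pd (hgk k) i).differentiable (by simp)) x).mul
        ((((hvk k).differentiable (by simp)) (g x)).comp x (hgd x))
    rw [hPdef]
    simp only [hw i]
    rw [pd_sum hsummand]
    refine Finset.sum_congr rfl fun k _ => ?_
    have hb : DifferentiableAt ℝ (fun y => v (g y) k) x :=
      (((hvk k).differentiable (by simp)) (g x)).comp x (hgd x)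
    rw [pd_mul (((contDiff_pd (hgk k) i).differentiable (by simp)) x) hb j]
    have hcomp : pd j (fun y => v (g y) k) x
        = ∑ l, pd j (fun y => g y l) x * pd l (fun z => v z k) (g x) :=
      pd_comp (((hvk k).differentiable (by simp)) (g x)) (hgd x) j
    rw [hcomp]
    have : ∑ l, pd j (fun y => g y l) x * pd l (fun z => v z k) (g x) = ∑ l, B k l * A l j := by
      refine Finset.sum_congr rfl fun l _ => ?_
      rw [mul_comm]; rfl
    rw [this]; rfl
  have hSsymm : ∀ k i j, S k i j = S k j i := fun k i j => pd_pd_symm (hgk k) x i j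
  have hWx : ∀ i, W x i = ∑ k, A k i * u k := by
    intro i
    simp [hW, jac, Matrix.mulVec, dotProduct, Matrix.transpose_apply, hA, hu]
  have key := alg_key A B S u P hP hSsymm (hvol x)
  calc dot (W x) (vcurl W x)
      = (∑ k, A k 0 * u k) * (P 2 1 - P 1 2) + (∑ k, A k 1 * u k) * (P 0 2 - P 2 0) +
        (∑ k, A k 2 * u k) * (P 1 0 - P 0 1) := by
        simp only [dot, Fin.sum_univ_three, vcurl, Matrix.cons_val_zero, Matrix.cons_val_one,
          Matrix.head_cons, Matrix.cons_val_two, Matrix.tail_cons, hWx]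
        rfl
    _ = u 0 * (B 2 1 - B 1 2) + u 1 * (B 0 2 - B 2 0) + u 2 * (B 1 0 - B 0 1) := key
    _ = dot (v (g x)) (vcurl v (g x)) := by
        simp only [dot, Fin.sum_univ_three, vcurl, Matrix.cons_val_zero, Matrix.cons_val_one,
          Matrix.head_cons, Matrix.cons_val_two, Matrix.tail_cons]
        rfl
lemma fderiv_det_eq (g : V3 → V3) (hg : Differentiable ℝ g) (hvol : ∀ x, (jac g x).det = 1)
    (x : V3) : (fderiv ℝ g x).det = 1 := by
  have h : (LinearMap.toMatrix (Pi.basisFun ℝ (Fin 3)) (Pi.basisFun ℝ (Fin 3))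
      ((fderiv ℝ g x) : V3 →ₗ[ℝ] V3)) = jac g x := by
    ext i j
    rw [LinearMap.toMatrix_apply]
    simp only [Pi.basisFun_apply, Pi.basisFun_repr, ContinuousLinearMap.coe_coe]
    rw [fderiv_pi_apply (hg x)]
    rfl
  have := LinearMap.det_toMatrix (Pi.basisFun ℝ (Fin 3)) ((fderiv ℝ g x) : V3 →ₗ[ℝ] V3)
  rw [h, hvol x] at this
  exact this.symm

theorem helicity_pullback_invariant (g ginv : V3 → V3)
    (hg : ContDiff ℝ (⊤ : ℕ∞) g) (hginv : ContDiff ℝ (⊤ : ℕ∞) ginv)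
    (hleft : Function.LeftInverse ginv g) (hright : Function.RightInverse ginv g)
    (hvol : ∀ x, (jac g x).det = 1)
    (v : V3 → V3) (hv : ContDiff ℝ (⊤ : ℕ∞) v) (hvsupp : HasCompactSupport v) :
    Hel (fun x => ((jac g x)ᵀ).mulVec (v (g x))) = Hel v := by
  have hgd : Differentiable ℝ g := hg.differentiable (by simp)
  have hinj : Set.InjOn g Set.univ := hleft.injective.injOn
  have hcov := integral_image_eq_integral_abs_det_fderiv_smul (volume : Measure V3)
    MeasurableSet.univ (fun x _ => (hgd x).hasFDerivAt.hasFDerivWithinAt) hinj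
    (fun y => dot (v y) (vcurl v y))
  rw [Set.image_univ, hright.surjective.range_eq] at hcov
  simp only [MeasureTheory.setIntegral_univ] at hcov
  unfold Hel
  have hpt : (fun x => dot (((jac g x)ᵀ).mulVec (v (g x)))
      (vcurl (fun y => ((jac g y)ᵀ).mulVec (v (g y))) x))
      = fun x => |(fderiv ℝ g x).det| • dot (v (g x)) (vcurl v (g x)) := by
    funext x
    rw [fderiv_det_eq g hgd hvol x]
    simpa using ptwise g v hg hv hvol x
  rw [hpt, ← hcov]
end
end

section
/- Let u : ℝ × ℝ³ → ℝ³ and p : ℝ × ℝ³ → ℝ be smooth, with u(t,·) divergence-free and Schwartz-class for every t, satisfying the incompressible Euler equation ∂u/∂t = −(u·∇)u − ∇p. Let g : ℝ × ℝ³ → ℝ³ be smooth with ∂g/∂t(t,x) = u(t, g(t,x)) and g(0,x) = x, and assume g(t,·) is a diffeomorphism of ℝ³ for every t. Then for every t there exists a smooth function f_t : ℝ³ → ℝ such that (Dg(t,x))ᵀ u(t, g(t,x)) = u(0,x) + ∇f_t(x) for all x, where Dg(t,x) is the Jacobian of g(t,·) at x. (This is the Kelvin/Weber transport formula u_t = Ad(g_t⁻¹)ᵀ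 u₀, expressing conservation of the momentum map associated with the relabeling symmetry.) -/
open MeasureTheory Matrix Set ENNReal NNReal

noncomputable section

/-- Gradient of a scalar function on ℝ³. -/
noncomputable def grad (f : V3 → ℝ) (x : V3) : V3 := fun i => pd i f x

/-- Directional derivative `(X·∇)Y`. -/
noncomputable def covD (X Y : V3 → V3) (x : V3) : V3 :=
  fun i => ∑ j, X x j * pd j (fun y => Y y i) x

/-- The operator `(∇ᵀX)Y`, with i-th component `Σ_j (∂_i X^j) Y^j`. -/
noncomputable def gradT (X Y : V3 → V3) (x : V3) : V3 :=
  fun i => ∑ j, pd i (fun y => X y j) x * Y x j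

/-- Componentwise Laplacian of a vector field. -/
noncomputable def lapl (v : V3 → V3) (x : V3) : V3 :=
  fun i => ∑ j, pd j (fun y => pd j (fun z => v z i) y) x

/-- Time derivative `∂u/∂t` of a time-dependent vector field. -/
noncomputable def dtv (u : ℝ → V3 → V3) (t : ℝ) (x : V3) : V3 :=
  fun i => deriv (fun s => u s x i) t

variable {E F : Type*} [NormedAddCommGroup E] [NormedSpace ℝ E]
  [NormedAddCommGroup F] [NormedSpace ℝ F]

section Slice

variable {G : ℝ × V3 → ℝ}

lemma sliceX_hasFDerivAt (hG : ContDiff ℝ (⊤ : ℕ∞) G) (s : ℝ) (x : V3) :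
    HasFDerivAt (fun y => G (s, y))
      ((fderiv ℝ G (s, x)).comp (ContinuousLinearMap.inr ℝ ℝ V3)) x :=
  ((hG.differentiable (by simp) (s, x)).hasFDerivAt).comp x (hasFDerivAt_prodMk_right s x)

lemma pd_slice (hG : ContDiff ℝ (⊤ : ℕ∞) G) (s : ℝ) (x : V3) (i : Fin 3) :
    pd i (fun y => G (s, y)) x = fderiv ℝ G (s, x) (0, Pi.single i 1) := by
  rw [pd, (sliceX_hasFDerivAt hG s x).fderiv]
  rfl

lemma sliceT_hasDerivAt (hG : ContDiff ℝ (⊤ : ℕ∞) G) (s : ℝ) (x : V3) :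
    HasDerivAt (fun r => G (r, x)) (fderiv ℝ G (s, x) (1, 0)) s :=
  ((hG.differentiable (by simp) (s, x)).hasFDerivAt).comp_hasDerivAt s
    ((hasDerivAt_id s).prodMk (hasDerivAt_const s x))

lemma mixed_hasDerivAt (hG : ContDiff ℝ (⊤ : ℕ∞) G) (s : ℝ) (x : V3) (v : V3) :
    HasDerivAt (fun r => fderiv ℝ G (r, x) (0, v))
      (fderiv ℝ (fun q => fderiv ℝ G q (1, 0)) (s, x) (0, v)) s := by
  have hD : ContDiff ℝ (⊤ : ℕ∞) (fderiv ℝ G) := hG.fderiv_right (by simp)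
  have hDd : HasFDerivAt (fderiv ℝ G) (fderiv ℝ (fderiv ℝ G) (s, x)) (s, x) :=
    (hD.differentiable (by simp) _).hasFDerivAt
  have h1 : HasDerivAt (fun r => fderiv ℝ G (r, x)) (fderiv ℝ (fderiv ℝ G) (s, x) (1, 0)) s :=
    hDd.comp_hasDerivAt s ((hasDerivAt_id s).prodMk (hasDerivAt_const s x))
  have h2 : HasDerivAt (fun r => fderiv ℝ G (r, x) (0, v))
      (fderiv ℝ (fderiv ℝ G) (s, x) (1, 0) (0, v)) s := by
    simpa using h1.clm_apply (hasDerivAt_const s ((0, v) : ℝ × V3))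
  have hsymm : fderiv ℝ (fderiv ℝ G) (s, x) (1, 0) (0, v)
      = fderiv ℝ (fderiv ℝ G) (s, x) (0, v) (1, 0) :=
    second_derivative_symmetric (fun y => (hG.differentiable (by simp) y).hasFDerivAt) hDd _ _
  have h3 : fderiv ℝ (fun q => fderiv ℝ G q (1, 0)) (s, x) (0, v)
      = fderiv ℝ (fderiv ℝ G) (s, x) (0, v) (1, 0) := by
    rw [fderiv_clm_apply (hD.differentiable (by simp) _)
      (differentiableAt_const _)]
    simp
  rw [h3, ← hsymm]
  exact h2

end Slice


lemma clm_apply_eq_sum (φ : V3 →L[ℝ] ℝ) (w : V3) : φ w = ∑ j, w j * φ (Pi.single j 1) := by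
  have hw : w = ∑ j, w j • (Pi.single j 1 : V3) := by
    funext k
    simp [Finset.sum_apply, Pi.single_apply]
  conv_lhs => rw [hw]
  rw [map_sum]
  simp [smul_eq_mul]

lemma fderiv_apply_component (Φ : V3 → V3) (x w : V3)
    (h : ∀ k, DifferentiableAt ℝ (fun y => Φ y k) x) (k : Fin 3) :
    fderiv ℝ Φ x w k = fderiv ℝ (fun y => Φ y k) x w := by
  have hh : fderiv ℝ Φ x = ContinuousLinearMap.pi (fun k => fderiv ℝ (fun y => Φ y k) x) :=
    fderiv_pi h
  rw [hh, ContinuousLinearMap.pi_apply]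

theorem kelvin_weber_transport (u : ℝ → V3 → V3) (p : ℝ → V3 → ℝ)
    (hu : ContDiff ℝ (⊤ : ℕ∞) fun q : ℝ × V3 => u q.1 q.2)
    (hp : ContDiff ℝ (⊤ : ℕ∞) fun q : ℝ × V3 => p q.1 q.2)
    (hdiv : ∀ t x, vdiv (u t) x = 0)
    (hudecay : ∀ t, ∀ (k n : ℕ), ∃ C : ℝ, ∀ x : V3,
      ‖x‖ ^ k * ‖iteratedFDeriv ℝ n (u t) x‖ ≤ C)
    (hpdecay : ∀ t, ∀ (k n : ℕ), ∃ C : ℝ, ∀ x : V3,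
      ‖x‖ ^ k * ‖iteratedFDeriv ℝ n (p t) x‖ ≤ C)
    (heuler : ∀ t x, dtv u t x = -(covD (u t) (u t) x) - grad (p t) x)
    (g ginv : ℝ → V3 → V3)
    (hg : ContDiff ℝ (⊤ : ℕ∞) fun q : ℝ × V3 => g q.1 q.2)
    (hflow : ∀ t x, HasDerivAt (fun s => g s x) (u t (g t x)) t)
    (hg0 : ∀ x, g 0 x = x)
    (hginv : ∀ t, ContDiff ℝ (⊤ : ℕ∞) (ginv t))
    (hleft : ∀ t, Function.LeftInverse (ginv t) (g t))
    (hright : ∀ t, Function.RightInverse (ginv t) (g t))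
    (t : ℝ) :
    ∃ f : V3 → ℝ, ContDiff ℝ (⊤ : ℕ∞) f ∧
      ∀ x, ((jac (g t) x)ᵀ).mulVec (u t (g t x)) = u 0 x + grad f x := by
  classical
  -- componentwise smoothness
  have hgj : ∀ j : Fin 3, ContDiff ℝ (⊤ : ℕ∞) fun q : ℝ × V3 => g q.1 q.2 j := fun j => contDiff_pi.1 hg j
  have huj : ∀ j : Fin 3, ContDiff ℝ (⊤ : ℕ∞) fun q : ℝ × V3 => u q.1 q.2 j := fun j => contDiff_pi.1 hu j
  have hgq : ContDiff ℝ (⊤ : ℕ∞) fun q : ℝ × V3 => ((q.1, g q.1 q.2) : ℝ × V3) := contDiff_fst.prodMk hg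
  have hugj : ∀ j : Fin 3, ContDiff ℝ (⊤ : ℕ∞) fun q : ℝ × V3 => u q.1 (g q.1 q.2) j :=
    fun j => (huj j).comp hgq
  have hpg : ContDiff ℝ (⊤ : ℕ∞) fun q : ℝ × V3 => p q.1 (g q.1 q.2) := hp.comp hgq
  set L : ℝ × V3 → ℝ := fun q =>
    (∑ j, u q.1 (g q.1 q.2) j * u q.1 (g q.1 q.2) j) / 2 - p q.1 (g q.1 q.2) with hLdef
  have hL : ContDiff ℝ (⊤ : ℕ∞) L :=
    ((ContDiff.sum fun j _ => (hugj j).mul (hugj j)).div_const 2).sub hpg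
  -- key transport identity for ∂ₜ g
  have KEY1 : ∀ (q : ℝ × V3) (j : Fin 3),
      fderiv ℝ (fun q : ℝ × V3 => g q.1 q.2 j) q (1, 0) = u q.1 (g q.1 q.2) j := by
    intro q j
    have h1 := sliceT_hasDerivAt (hgj j) q.1 q.2
    have h2 : HasDerivAt (fun r => g r q.2 j) (u q.1 (g q.1 q.2) j) q.1 :=
      (hasDerivAt_pi.1 (hflow q.1 q.2)) j
    exact h1.unique h2
  -- D1 : time derivative of the Jacobian entries
  have D1 : ∀ (s : ℝ) (x : V3) (i j : Fin 3),
      HasDerivAt (fun r => pd i (fun y => g r y j) x) (pd i (fun y => u s (g s y) j) x) s := by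
    intro s x i j
    have hm := mixed_hasDerivAt (hgj j) s x (Pi.single i 1)
    have hfun : (fun r : ℝ => fderiv ℝ (fun q : ℝ × V3 => g q.1 q.2 j) (r, x) (0, Pi.single i 1))
        = fun r => pd i (fun y => g r y j) x :=
      funext fun r => (pd_slice (hgj j) r x i).symm
    have hderiv : fderiv ℝ (fun q : ℝ × V3 => fderiv ℝ (fun q : ℝ × V3 => g q.1 q.2 j) q (1, 0))
        (s, x) (0, Pi.single i 1) = pd i (fun y => u s (g s y) j) x := by
      have he : (fun q : ℝ × V3 => fderiv ℝ (fun q : ℝ × V3 => g q.1 q.2 j) q (1, 0))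
          = fun q : ℝ × V3 => u q.1 (g q.1 q.2) j := funext fun q => KEY1 q j
      rw [he, ← pd_slice (hugj j) s x i]
    rw [hfun, hderiv] at hm
    exact hm
  -- D2 : time derivative of u along the flow (Euler equation)
  have D2 : ∀ (s : ℝ) (x : V3) (j : Fin 3),
      HasDerivAt (fun r => u r (g r x) j) (-pd j (p s) (g s x)) s := by
    intro s x j
    have hcurve : HasDerivAt (fun r : ℝ => ((r, g r x) : ℝ × V3)) (1, u s (g s x)) s :=
      (hasDerivAt_id s).prodMk (hflow s x)
    have h0 : HasDerivAt (fun r => u r (g r x) j)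
        (fderiv ℝ (fun q : ℝ × V3 => u q.1 q.2 j) (s, g s x) (1, u s (g s x))) s :=
      (((huj j).differentiable (by simp) _).hasFDerivAt).comp_hasDerivAt s hcurve
    have hsplit : fderiv ℝ (fun q : ℝ × V3 => u q.1 q.2 j) (s, g s x) (1, u s (g s x))
        = fderiv ℝ (fun q : ℝ × V3 => u q.1 q.2 j) (s, g s x) (1, 0)
          + fderiv ℝ (fun q : ℝ × V3 => u q.1 q.2 j) (s, g s x) (0, u s (g s x)) := by
      rw [← map_add]
      congr 1
      simp [Prod.ext_iff]
    have hT : fderiv ℝ (fun q : ℝ × V3 => u q.1 q.2 j) (s, g s x) (1, 0) = dtv u s (g s x) j :=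
      ((sliceT_hasDerivAt (huj j) s (g s x)).deriv).symm
    have hX : fderiv ℝ (fun q : ℝ × V3 => u q.1 q.2 j) (s, g s x) (0, u s (g s x))
        = ∑ k, u s (g s x) k * pd k (fun z => u s z j) (g s x) := by
      have h4 : fderiv ℝ (fun z => u s z j) (g s x)
          = (fderiv ℝ (fun q : ℝ × V3 => u q.1 q.2 j) (s, g s x)).comp
              (ContinuousLinearMap.inr ℝ ℝ V3) :=
        (sliceX_hasFDerivAt (huj j) s (g s x)).fderiv
      have h5 := clm_apply_eq_sum (fderiv ℝ (fun z => u s z j) (g s x)) (u s (g s x))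
      calc fderiv ℝ (fun q : ℝ × V3 => u q.1 q.2 j) (s, g s x) (0, u s (g s x))
          = ((fderiv ℝ (fun q : ℝ × V3 => u q.1 q.2 j) (s, g s x)).comp
              (ContinuousLinearMap.inr ℝ ℝ V3)) (u s (g s x)) := rfl
        _ = fderiv ℝ (fun z => u s z j) (g s x) (u s (g s x)) := by rw [← h4]
        _ = ∑ k, u s (g s x) k * pd k (fun z => u s z j) (g s x) := h5
    have he := congrFun (heuler s (g s x)) j
    simp only [Pi.sub_apply, Pi.neg_apply, covD, grad] at he
    have hval : fderiv ℝ (fun q : ℝ × V3 => u q.1 q.2 j) (s, g s x) (1, u s (g s x))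
        = -pd j (p s) (g s x) := by
      rw [hsplit, hT, hX]
      rw [he]
      ring
    rw [hval] at h0
    exact h0
  -- D3 : main pointwise derivative identity
  have D3 : ∀ (s : ℝ) (x : V3) (i : Fin 3),
      HasDerivAt (fun r => ∑ j, pd i (fun y => g r y j) x * u r (g r x) j)
        (pd i (fun y => L (s, y)) x) s := by
    intro s x i
    have hsum : HasDerivAt (fun r => ∑ j, pd i (fun y => g r y j) x * u r (g r x) j)
        (∑ j, (pd i (fun y => u s (g s y) j) x * u s (g s x) j
          + pd i (fun y => g s y j) x * (-pd j (p s) (g s x)))) s :=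
      HasDerivAt.fun_sum (fun j _ => (D1 s x i j).mul (D2 s x j))
    have hAj : ∀ j : Fin 3, HasFDerivAt (fun y => u s (g s y) j)
        (fderiv ℝ (fun y => u s (g s y) j) x) x := fun j =>
      (((hugj j).comp (contDiff_const.prodMk contDiff_id)).differentiable (by simp) x).hasFDerivAt
    have hgS : ∀ k : Fin 3, DifferentiableAt ℝ (fun y => g s y k) x := fun k =>
      ((hgj k).comp (contDiff_const.prodMk contDiff_id)).differentiable (by simp) x
    have hgdiff : HasFDerivAt (fun y => g s y) (fderiv ℝ (fun y => g s y) x) x :=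
      ((hg.comp (contDiff_const.prodMk contDiff_id)).differentiable (by simp) x).hasFDerivAt
    have hpdiff : HasFDerivAt (p s) (fderiv ℝ (p s) (g s x)) (g s x) :=
      ((hp.comp (contDiff_const.prodMk contDiff_id)).differentiable (by simp) (g s x)).hasFDerivAt
    have hS : HasFDerivAt (fun y => ∑ j, u s (g s y) j * u s (g s y) j)
        (∑ j, (u s (g s x) j • fderiv ℝ (fun y => u s (g s y) j) x
          + u s (g s x) j • fderiv ℝ (fun y => u s (g s y) j) x)) x :=
      HasFDerivAt.fun_sum (fun j _ => (hAj j).fun_mul (hAj j))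
    have hhalf : HasFDerivAt (fun y => (∑ j, u s (g s y) j * u s (g s y) j) / 2)
        ((2:ℝ)⁻¹ • ∑ j, (u s (g s x) j • fderiv ℝ (fun y => u s (g s y) j) x
          + u s (g s x) j • fderiv ℝ (fun y => u s (g s y) j) x)) x := by
      have h6 := hS.fun_const_smul (2⁻¹ : ℝ)
      simpa [smul_eq_mul, div_eq_inv_mul] using h6
    have hP : HasFDerivAt (fun y => p s (g s y))
        ((fderiv ℝ (p s) (g s x)).comp (fderiv ℝ (fun y => g s y) x)) x :=
      hpdiff.comp x hgdiff
    have htot : HasFDerivAt (fun y => L (s, y))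
        ((2:ℝ)⁻¹ • (∑ j, (u s (g s x) j • fderiv ℝ (fun y => u s (g s y) j) x
          + u s (g s x) j • fderiv ℝ (fun y => u s (g s y) j) x))
          - (fderiv ℝ (p s) (g s x)).comp (fderiv ℝ (fun y => g s y) x)) x := hhalf.sub hP
    have hval : pd i (fun y => L (s, y)) x
        = (∑ j, u s (g s x) j * pd i (fun y => u s (g s y) j) x)
          - ∑ k, pd i (fun y => g s y k) x * pd k (p s) (g s x) := by
      rw [pd, htot.fderiv]
      rw [ContinuousLinearMap.sub_apply]
      congr 1
      · rw [ContinuousLinearMap.smul_apply, ContinuousLinearMap.sum_apply, smul_eq_mul,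
          Finset.mul_sum]
        refine Finset.sum_congr rfl (fun j _ => ?_)
        simp only [ContinuousLinearMap.add_apply, ContinuousLinearMap.smul_apply, smul_eq_mul, pd]
        ring
      · rw [ContinuousLinearMap.comp_apply]
        rw [clm_apply_eq_sum (fderiv ℝ (p s) (g s x))]
        refine Finset.sum_congr rfl (fun k _ => ?_)
        rw [fderiv_apply_component (fun y => g s y) x (Pi.single i 1) hgS k]
        rfl
    have heq : (∑ j, (pd i (fun y => u s (g s y) j) x * u s (g s x) j
        + pd i (fun y => g s y j) x * (-pd j (p s) (g s x))))
        = pd i (fun y => L (s, y)) x := by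
      rw [hval, ← Finset.sum_sub_distrib]
      refine Finset.sum_congr rfl (fun j _ => ?_)
      ring
    rw [← heq]
    exact hsum
  -- continuity of the partial derivatives of L in time
  have hcont_pd : ∀ (x : V3) (i : Fin 3),
      Continuous fun s : ℝ => fderiv ℝ L (s, x) (0, Pi.single i 1) := by
    intro x i
    have h1 : Continuous (fderiv ℝ L) := (hL.fderiv_right (m := (⊤ : ℕ∞)) (by simp)).continuous
    exact (ContinuousLinearMap.apply ℝ ℝ (((0 : ℝ), Pi.single i 1) : ℝ × V3)).continuous.comp
      (h1.comp (continuous_id.prodMk continuous_const))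
  -- D4 : fundamental theorem of calculus
  have D4 : ∀ (x : V3) (i : Fin 3),
      (∫ s in (0:ℝ)..t, fderiv ℝ L (s, x) (0, Pi.single i 1))
        = (∑ j, pd i (fun y => g t y j) x * u t (g t x) j)
          - ∑ j, pd i (fun y => g 0 y j) x * u 0 (g 0 x) j := by
    intro x i
    have hde : ∀ s ∈ uIcc (0:ℝ) t,
        HasDerivAt (fun r => ∑ j, pd i (fun y => g r y j) x * u r (g r x) j)
          (fderiv ℝ L (s, x) (0, Pi.single i 1)) s := by
      intro s _
      have hD3 := D3 s x i
      rwa [pd_slice hL s x i] at hD3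
    exact intervalIntegral.integral_eq_sub_of_hasDerivAt hde
      ((hcont_pd x i).intervalIntegrable _ _)
  -- value at time 0
  have hW0 : ∀ (x : V3) (i : Fin 3),
      (∑ j, pd i (fun y => g 0 y j) x * u 0 (g 0 x) j) = u 0 x i := by
    intro x i
    have hpd0 : ∀ j : Fin 3, pd i (fun y => g 0 y j) x = (Pi.single i 1 : V3) j := by
      intro j
      have hfun : (fun y : V3 => g 0 y j) = fun y : V3 => y j := funext fun y => by rw [hg0]
      rw [pd, hfun]
      have hproj : fderiv ℝ (fun y : V3 => y j) x = (ContinuousLinearMap.proj j : V3 →L[ℝ] ℝ) :=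
        (ContinuousLinearMap.proj j : V3 →L[ℝ] ℝ).fderiv
      rw [hproj]
      rfl
    calc ∑ j, pd i (fun y => g 0 y j) x * u 0 (g 0 x) j
        = ∑ j, (Pi.single i 1 : V3) j * u 0 x j := by
          rw [hg0 x]
          exact Finset.sum_congr rfl fun j _ => by rw [hpd0 j]
      _ = u 0 x i := by simp [Pi.single_apply]
  -- the Weber potential
  set f : V3 → ℝ := fun x => ∫ s in (0:ℝ)..t, L (s, x) with hfdef
  have hFC : Continuous fun q : ℝ × V3 =>
      (fderiv ℝ L q).comp (ContinuousLinearMap.inr ℝ ℝ V3) :=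
    ((hL.fderiv_right (m := (⊤ : ℕ∞)) (by simp)).continuous).clm_comp continuous_const
  have D5 : ∀ x₀ : V3, HasFDerivAt f
      (∫ s in (0:ℝ)..t, (fderiv ℝ L (s, x₀)).comp (ContinuousLinearMap.inr ℝ ℝ V3)) x₀ := by
    intro x₀
    obtain ⟨C, hC⟩ := ((isCompact_uIcc (a := (0:ℝ)) (b := t)).prod
      (isCompact_closedBall x₀ 1)).exists_bound_of_continuousOn hFC.continuousOn
    refine intervalIntegral.hasFDerivAt_integral_of_dominated_of_fderiv_le
      (F := fun x s => L (s, x))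
      (F' := fun x s => (fderiv ℝ L (s, x)).comp (ContinuousLinearMap.inr ℝ ℝ V3))
      (bound := fun _ => C) (Metric.ball_mem_nhds x₀ one_pos) ?_ ?_ ?_ ?_ ?_ ?_
    · exact Filter.Eventually.of_forall fun x =>
        (hL.continuous.comp (continuous_id.prodMk continuous_const)).aestronglyMeasurable
    · exact (hL.continuous.comp (continuous_id.prodMk continuous_const)).intervalIntegrable _ _
    · exact (hFC.comp (continuous_id.prodMk continuous_const)).aestronglyMeasurable
    · refine Filter.Eventually.of_forall fun s hs => fun x hx => ?_
      exact hC (s, x) (Set.mk_mem_prod (uIoc_subset_uIcc hs) (Metric.ball_subset_closedBall hx))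
    · exact intervalIntegrable_const
    · exact Filter.Eventually.of_forall fun s _ x _ => sliceX_hasFDerivAt hL s x
  have D6 : ∀ (x : V3) (i : Fin 3),
      pd i f x = (∑ j, pd i (fun y => g t y j) x * u t (g t x) j) - u 0 x i := by
    intro x i
    have h1 : pd i f x = (∫ s in (0:ℝ)..t,
        (fderiv ℝ L (s, x)).comp (ContinuousLinearMap.inr ℝ ℝ V3)) (Pi.single i 1) := by
      rw [pd, (D5 x).fderiv]
    have hInt : IntervalIntegrable
        (fun s : ℝ => (fderiv ℝ L (s, x)).comp (ContinuousLinearMap.inr ℝ ℝ V3))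
        MeasureTheory.volume 0 t :=
      (hFC.comp (continuous_id.prodMk continuous_const)).intervalIntegrable _ _
    rw [h1, ContinuousLinearMap.intervalIntegral_apply hInt (Pi.single i 1)]
    have h2 : ∀ s : ℝ, ((fderiv ℝ L (s, x)).comp (ContinuousLinearMap.inr ℝ ℝ V3))
        (Pi.single i 1) = fderiv ℝ L (s, x) (0, Pi.single i 1) := fun s => rfl
    simp_rw [h2]
    rw [D4 x i, hW0 x i]
  -- the candidate derivative, as a smooth family of continuous linear maps
  set Φ : V3 → (V3 →L[ℝ] ℝ) := fun x => ∑ i,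
    ((∑ j, pd i (fun y => g t y j) x * u t (g t x) j) - u 0 x i) •
      (ContinuousLinearMap.proj i : V3 →L[ℝ] ℝ) with hΦdef
  have hΦsingle : ∀ (x : V3) (k : Fin 3), Φ x (Pi.single k 1)
      = (∑ j, pd k (fun y => g t y j) x * u t (g t x) j) - u 0 x k := by
    intro x k
    rw [hΦdef]
    simp [ContinuousLinearMap.sum_apply, ContinuousLinearMap.proj_apply, Pi.single_apply]
  have hfd : ∀ x₀ : V3, HasFDerivAt f (Φ x₀) x₀ := by
    intro x₀
    have h := D5 x₀
    have heq : (∫ s in (0:ℝ)..t,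
        (fderiv ℝ L (s, x₀)).comp (ContinuousLinearMap.inr ℝ ℝ V3)) = Φ x₀ := by
      apply ContinuousLinearMap.ext
      intro v
      rw [clm_apply_eq_sum _ v, clm_apply_eq_sum (Φ x₀) v]
      refine Finset.sum_congr rfl fun k _ => ?_
      congr 1
      have hl : (∫ s in (0:ℝ)..t,
          (fderiv ℝ L (s, x₀)).comp (ContinuousLinearMap.inr ℝ ℝ V3)) (Pi.single k 1)
          = pd k f x₀ := by
        rw [pd, (D5 x₀).fderiv]
      rw [hl, hΦsingle x₀ k, D6 x₀ k]
    rwa [heq] at h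
  -- smoothness of the coefficients
  have hpd_g : ∀ (i j : Fin 3), ContDiff ℝ (⊤ : ℕ∞) fun x => pd i (fun y => g t y j) x := by
    intro i j
    have he : (fun x => pd i (fun y => g t y j) x)
        = fun x => fderiv ℝ (fun q : ℝ × V3 => g q.1 q.2 j) (t, x) (0, Pi.single i 1) :=
      funext fun x => pd_slice (hgj j) t x i
    rw [he]
    exact (((hgj j).fderiv_right (by simp)).comp
      (contDiff_const.prodMk contDiff_id)).clm_apply contDiff_const
  have hcΦ : ContDiff ℝ (⊤ : ℕ∞) Φ := by
    rw [hΦdef]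
    refine ContDiff.sum fun i _ => ContDiff.fun_smul ?_ contDiff_const
    exact (ContDiff.sum fun j _ => (hpd_g i j).mul
        ((hugj j).comp (contDiff_const.prodMk contDiff_id))).sub
      ((huj i).comp (contDiff_const.prodMk contDiff_id))
  have hfC : ContDiff ℝ (⊤ : ℕ∞) f := by
    have hfderiv : fderiv ℝ f = Φ := funext fun x => (hfd x).fderiv
    exact contDiff_infty_iff_fderiv.2 ⟨fun x => (hfd x).differentiableAt, hfderiv ▸ hcΦ⟩
  refine ⟨f, hfC, ?_⟩
  intro x
  funext i
  have hlhs : ((jac (g t) x)ᵀ).mulVec (u t (g t x)) i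
      = ∑ j, pd i (fun y => g t y j) x * u t (g t x) j := by
    simp [Matrix.mulVec, dotProduct, jac, Matrix.transpose_apply]
  rw [hlhs]
  show _ = u 0 x i + pd i f x
  rw [D6 x i]
  ring
end
end
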